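/- With the hypotheses of the previous blockwise bound, if additionally c_θ · c_V > β², then λ_max(S) ≤ -c where c := ½(c_θ + c_V - √((c_θ - c_V)² + 4β²)) > 0; in particular S is negative definite. -/

import Mathlib

open Matrix Finset

/-- Euclidean norm of a finitely-indexed real vector. -/
noncomputable def euclNorm {n : Type*} [Fintype n] (x : n → ℝ) : ℝ :=
  Real.sqrt (∑ i, x i ^ 2)

/-- Largest eigenvalue of a (Hermitian = real symmetric) matrix. -/
noncomputable def lamMax {n : Type*} [Fintype n] [DecidableEq n] [Nonempty n]
    {A : Matrix n n ℝ} (hA : A.IsHermitian) : ℝ :=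
  ⨆ i, hA.eigenvalues i

/-- Operator 2-norm of a rectangular real matrix. -/
noncomputable def opNorm2 {m n : Type*} [Fintype m] [Fintype n] (C : Matrix m n ℝ) : ℝ :=
  sSup {r | ∃ x : n → ℝ, euclNorm x ≤ 1 ∧ r = euclNorm (C.mulVec x)}

/-!
Write `z = (x, y)` according to the blocks. Rayleigh's bound for `A` and `B` and the operator
norm bound for `C` give
`zᵀ S z ≤ -c_θ ‖x‖² + 2 β ‖x‖ ‖y‖ - c_V ‖y‖²`,
the quadratic form of the comparison matrix `M_c` at `(‖x‖, ‖y‖)`. This is at most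
`λ_max(M_c) (‖x‖² + ‖y‖²) = -c ‖z‖²`, and `c > 0` because `det M_c > 0` and `tr M_c < 0`.
The converse Rayleigh bound, tested on the eigenvectors of `S`, turns this into `λ_max(S) ≤ -c`.
-/

section EuclNorm

variable {n : Type*} [Fintype n]

lemma euclNorm_nonneg (x : n → ℝ) : 0 ≤ euclNorm x := Real.sqrt_nonneg _

lemma euclNorm_sq (x : n → ℝ) : euclNorm x ^ 2 = x ⬝ᵥ x := by
  rw [euclNorm, Real.sq_sqrt (by positivity)]
  simp only [dotProduct, sq]

lemma euclNorm_zero : euclNorm (0 : n → ℝ) = 0 := by simp [euclNorm]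

lemma euclNorm_pos {x : n → ℝ} (hx : x ≠ 0) : 0 < euclNorm x := by
  refine Real.sqrt_pos.2 ?_
  simpa [dotProduct, sq] using dotProduct_self_star_pos_iff.2 hx

lemma euclNorm_smul (c : ℝ) (x : n → ℝ) : euclNorm (c • x) = |c| * euclNorm x := by
  simp only [euclNorm, Pi.smul_apply, smul_eq_mul, mul_pow, ← Finset.mul_sum]
  rw [Real.sqrt_mul (sq_nonneg c), Real.sqrt_sq_eq_abs]

lemma dotProduct_le_euclNorm_mul (x y : n → ℝ) : x ⬝ᵥ y ≤ euclNorm x * euclNorm y := by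
  simpa [dotProduct, euclNorm] using Real.sum_mul_le_sqrt_mul_sqrt Finset.univ x y

end EuclNorm

section OpNorm2

variable {m n : Type*} [Fintype m] [Fintype n]

lemma bddAbove_opNorm2 (C : Matrix m n ℝ) :
    BddAbove {r | ∃ x : n → ℝ, euclNorm x ≤ 1 ∧ r = euclNorm (C *ᵥ x)} := by
  refine ⟨Real.sqrt (∑ i, ∑ j, C i j ^ 2), ?_⟩
  rintro _ ⟨x, hx, rfl⟩
  have hx2 : ∑ j, x j ^ 2 ≤ 1 := by
    rw [← Real.sqrt_le_one]; exact hx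
  refine Real.sqrt_le_sqrt (Finset.sum_le_sum fun i _ => ?_)
  calc (C *ᵥ x) i ^ 2 ≤ (∑ j, C i j ^ 2) * ∑ j, x j ^ 2 :=
        Finset.sum_mul_sq_le_sq_mul_sq Finset.univ (C i) x
    _ ≤ ∑ j, C i j ^ 2 := mul_le_of_le_one_right (by positivity) hx2

lemma euclNorm_mulVec_le_opNorm2_mul (C : Matrix m n ℝ) (y : n → ℝ) :
    euclNorm (C *ᵥ y) ≤ opNorm2 C * euclNorm y := by
  rcases eq_or_ne y 0 with rfl | hy
  · simp [euclNorm_zero]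
  set t := euclNorm y
  have ht : 0 < t := euclNorm_pos hy
  have hunit : euclNorm (t⁻¹ • y) = 1 := by
    rw [euclNorm_smul, abs_of_pos (inv_pos.2 ht), inv_mul_cancel₀ ht.ne']
  have hle : euclNorm (C *ᵥ (t⁻¹ • y)) ≤ opNorm2 C :=
    le_csSup (bddAbove_opNorm2 C) ⟨_, hunit.le, rfl⟩
  rw [mulVec_smul, euclNorm_smul, abs_of_pos (inv_pos.2 ht), inv_mul_le_iff₀ ht] at hle
  linarith

end OpNorm2

section LamMax

variable {n : Type*} [Fintype n] [DecidableEq n] [Nonempty n] {A : Matrix n n ℝ}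

lemma dotProduct_mulVec_le_lamMax_mul (hA : A.IsHermitian) (x : n → ℝ) :
    x ⬝ᵥ A *ᵥ x ≤ lamMax hA * (x ⬝ᵥ x) := by
  set U : Matrix n n ℝ := (hA.eigenvectorUnitary : Matrix n n ℝ)
  -- `y` holds the coordinates of `x` in the orthonormal eigenbasis
  set y : n → ℝ := x ᵥ* U with hy
  have hUt : star U = Uᵀ := by rw [star_eq_conjTranspose, conjTranspose_eq_transpose_of_trivial]
  have hUU : U * Uᵀ = 1 := hUt ▸ mem_unitaryGroup_iff.1 hA.eigenvectorUnitary.2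
  have hyx : ∀ w, y ⬝ᵥ w = x ⬝ᵥ U *ᵥ w := fun w => (dotProduct_mulVec x U w).symm
  have hyy : y ⬝ᵥ y = x ⬝ᵥ x := by
    rw [hyx, hy, ← mulVec_transpose, mulVec_mulVec, hUU, one_mulVec]
  have hdiag : x ⬝ᵥ A *ᵥ x = ∑ i, hA.eigenvalues i * y i ^ 2 := by
    conv_lhs => rw [hA.spectral_theorem, Unitary.conjStarAlgAut_apply]
    rw [hUt, ← mulVec_mulVec, ← mulVec_mulVec, mulVec_transpose, ← hy, ← hyx]
    simp only [dotProduct, mulVec_diagonal, Function.comp_apply, RCLike.ofReal_real_eq_id, id]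
    exact Finset.sum_congr rfl fun i _ => by ring
  have hle : ∀ i, hA.eigenvalues i ≤ lamMax hA := le_ciSup (Set.finite_range _).bddAbove
  rw [hdiag, ← hyy, dotProduct, Finset.mul_sum]
  exact Finset.sum_le_sum fun i _ => by nlinarith [hle i, sq_nonneg (y i)]

lemma lamMax_le_iff (hA : A.IsHermitian) (r : ℝ) :
    lamMax hA ≤ r ↔ ∀ x : n → ℝ, x ⬝ᵥ A *ᵥ x ≤ r * (x ⬝ᵥ x) := by
  refine ⟨fun h x => (dotProduct_mulVec_le_lamMax_mul hA x).trans
    (mul_le_mul_of_nonneg_right h (by simpa using dotProduct_self_star_nonneg x)), fun h => ?_⟩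
  refine ciSup_le fun i => ?_
  set v : n → ℝ := ⇑(hA.eigenvectorBasis i)
  have hv : v ⬝ᵥ v = 1 := by
    have := hA.eigenvectorBasis.orthonormal.1 i
    rw [EuclideanSpace.norm_eq, Real.sqrt_eq_one] at this
    simpa [dotProduct, sq, v] using this
  have heq : hA.eigenvalues i = v ⬝ᵥ A *ᵥ v := by simpa using hA.eigenvalues_eq i
  simpa [heq, hv] using h v

end LamMax

/-- `-comparisonRate cθ cV β` is the largest eigenvalue of `!![-cθ, β; β, -cV]`. -/
noncomputable def comparisonRate (cθ cV β : ℝ) : ℝ :=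
  (1/2) * (cθ + cV - Real.sqrt ((cθ - cV)^2 + 4*β^2))

lemma comparisonRate_pos {cθ cV β : ℝ} (hcθ : 0 < cθ) (hcV : 0 < cV) (hdet : cθ * cV > β^2) :
    0 < comparisonRate cθ cV β := by
  have hroot : Real.sqrt ((cθ - cV)^2 + 4*β^2) < cθ + cV :=
    (Real.sqrt_lt' (by linarith)).2 (by nlinarith)
  unfold comparisonRate
  linarith

lemma quadForm_le_neg_comparisonRate (cθ cV β a b : ℝ) :
    -cθ * a^2 + 2 * β * a * b - cV * b^2 ≤ -comparisonRate cθ cV β * (a^2 + b^2) := by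
  unfold comparisonRate
  set D := Real.sqrt ((cθ - cV)^2 + 4*β^2)
  have hD : D^2 = (cθ - cV)^2 + 4*β^2 := Real.sq_sqrt (by positivity)
  -- `p = cθ - c` and `q = cV - c` for `c = comparisonRate cθ cV β`
  set p := (cθ - cV + D) / 2
  set q := (cV - cθ + D) / 2
  have hpq : p * q = β^2 := by simp only [p, q]; linear_combination hD / 4
  have hsos : D * (p * a^2 - 2 * β * a * b + q * b^2) = (p*a - β*b)^2 + (q*b - β*a)^2 := by
    simp only [p, q] at hpq ⊢; linear_combination (a^2 + b^2) * hpq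
  have hform : 0 ≤ p * a^2 - 2 * β * a * b + q * b^2 := by
    rcases (show 0 ≤ D from Real.sqrt_nonneg _).eq_or_lt with hD0 | hD0
    · obtain ⟨hθV, hβ⟩ : cθ - cV = 0 ∧ β = 0 := by
        constructor <;> nlinarith [sq_nonneg (cθ - cV), sq_nonneg β]
      simp only [p, q, ← hD0, hβ]
      nlinarith
    · exact nonneg_of_mul_nonneg_right (hsos ▸ by positivity) hD0
  linear_combination hform

lemma sumElim_dotProduct_fromBlocks_mulVec {m n R : Type*} [Fintype m] [Fintype n] [CommRing R]
    (A : Matrix m m R) (B : Matrix n n R) (C : Matrix m n R) (x : m → R) (y : n → R) :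
    Sum.elim x y ⬝ᵥ fromBlocks A C Cᵀ B *ᵥ Sum.elim x y =
      x ⬝ᵥ A *ᵥ x + 2 * (x ⬝ᵥ C *ᵥ y) + y ⬝ᵥ B *ᵥ y := by
  have hsymm : y ⬝ᵥ Cᵀ *ᵥ x = x ⬝ᵥ C *ᵥ y := by
    rw [dotProduct_mulVec, vecMul_transpose, dotProduct_comm]
  rw [fromBlocks_mulVec, sumElim_dotProduct_sumElim, Sum.elim_comp_inl, Sum.elim_comp_inr,
    dotProduct_add, dotProduct_add, hsymm]
  ring

lemma dotProduct_fromBlocks_mulVec_le {m n : Type*} [Fintype m] [Fintype n]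
    {A : Matrix m m ℝ} {B : Matrix n n ℝ} {C : Matrix m n ℝ} {cθ cV β : ℝ}
    (hA : ∀ x, x ⬝ᵥ A *ᵥ x ≤ -cθ * (x ⬝ᵥ x)) (hB : ∀ y, y ⬝ᵥ B *ᵥ y ≤ -cV * (y ⬝ᵥ y))
    (hC : opNorm2 C ≤ β) (z : m ⊕ n → ℝ) :
    z ⬝ᵥ fromBlocks A C Cᵀ B *ᵥ z ≤ -comparisonRate cθ cV β * (z ⬝ᵥ z) := by
  obtain ⟨x, y, rfl⟩ : ∃ x y, z = Sum.elim x y := ⟨z ∘ Sum.inl, z ∘ Sum.inr, by simp⟩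
  have hcross : x ⬝ᵥ C *ᵥ y ≤ β * euclNorm x * euclNorm y :=
    calc x ⬝ᵥ C *ᵥ y ≤ euclNorm x * euclNorm (C *ᵥ y) := dotProduct_le_euclNorm_mul _ _
      _ ≤ euclNorm x * (β * euclNorm y) := by
        gcongr
        · exact euclNorm_nonneg x
        · exact (euclNorm_mulVec_le_opNorm2_mul C y).trans
            (mul_le_mul_of_nonneg_right hC (euclNorm_nonneg y))
      _ = β * euclNorm x * euclNorm y := by ring
  have hscalar := quadForm_le_neg_comparisonRate cθ cV β (euclNorm x) (euclNorm y)
  rw [euclNorm_sq, euclNorm_sq] at hscalar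
  rw [sumElim_dotProduct_fromBlocks_mulVec, sumElim_dotProduct_sumElim]
  linarith [hA x, hB y]

lemma posDef_neg_of_dotProduct_mulVec_le {n : Type*} [Fintype n] {S : Matrix n n ℝ}
    (hS : S.IsHermitian) {c : ℝ} (hc : 0 < c) (hquad : ∀ z, z ⬝ᵥ S *ᵥ z ≤ -c * (z ⬝ᵥ z)) :
    (-S).PosDef := by
  refine posDef_iff_dotProduct_mulVec.2 ⟨hS.neg, fun z hz => ?_⟩
  have hzz : 0 < z ⬝ᵥ z := by simpa using dotProduct_self_star_pos_iff.2 hz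
  have := hquad z
  simp only [star_trivial, neg_mulVec, dotProduct_neg]
  nlinarith

theorem stmt1_general {m n : ℕ} [NeZero m] [NeZero n]
    (A : Matrix (Fin m) (Fin m) ℝ) (B : Matrix (Fin n) (Fin n) ℝ)
    (C : Matrix (Fin m) (Fin n) ℝ)
    (hA : A.IsHermitian) (hB : B.IsHermitian)
    (hS : (Matrix.fromBlocks A C Cᵀ B).IsHermitian)
    (cθ cV β : ℝ) (hcθ : 0 < cθ) (hcV : 0 < cV)
    (hAmax : lamMax hA ≤ -cθ) (hBmax : lamMax hB ≤ -cV)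
    (hC : opNorm2 C ≤ β)
    (hdet : cθ * cV > β^2) :
    0 < (1/2) * (cθ + cV - Real.sqrt ((cθ - cV)^2 + 4*β^2)) ∧
    lamMax hS ≤ -((1/2) * (cθ + cV - Real.sqrt ((cθ - cV)^2 + 4*β^2))) ∧
    (-(Matrix.fromBlocks A C Cᵀ B)).PosDef := by
  have hc : 0 < comparisonRate cθ cV β := comparisonRate_pos hcθ hcV hdet
  have hquad := dotProduct_fromBlocks_mulVec_le ((lamMax_le_iff hA _).1 hAmax)
    ((lamMax_le_iff hB _).1 hBmax) hC
  exact ⟨hc, (lamMax_le_iff hS _).2 hquad, posDef_neg_of_dotProduct_mulVec_le hS hc hquad⟩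

theorem stmt1 {m n : ℕ} [NeZero m] [NeZero n]
    (A : Matrix (Fin m) (Fin m) ℝ) (B : Matrix (Fin n) (Fin n) ℝ)
    (C : Matrix (Fin m) (Fin n) ℝ)
    (hA : A.IsHermitian) (hB : B.IsHermitian)
    (hS : (Matrix.fromBlocks A C Cᵀ B).IsHermitian)
    (cθ cV β : ℝ) (hcθ : 0 < cθ) (hcV : 0 < cV) (hβ : 0 ≤ β)
    (hAmax : lamMax hA ≤ -cθ) (hBmax : lamMax hB ≤ -cV)
    (hC : opNorm2 C ≤ β)
    (hdet : cθ * cV > β^2) :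
    0 < (1/2) * (cθ + cV - Real.sqrt ((cθ - cV)^2 + 4*β^2)) ∧
    lamMax hS ≤ -((1/2) * (cθ + cV - Real.sqrt ((cθ - cV)^2 + 4*β^2))) ∧
    (-(Matrix.fromBlocks A C Cᵀ B)).PosDef :=
  stmt1_general A B C hA hB hS cθ cV β hcθ hcV hAmax hBmax hC hdet
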